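/- Let μ > 0, σ > 0, α > 1, and b be real. Define the one-sided truncated normal densities p(x) = (1/(μσ√(2π))) · exp(-x²/(2μ²σ²)) / Φ(b/(μσ)) and q(x) = (1/(μσ√(2π))) · exp(-(x-μ)²/(2μ²σ²)) / Φ((b-μ)/(μσ)) for x ≤ b. Then (1/(α-1)) · ln(∫_{-∞}^b q(x)^α · p(x)^(1-α) dx) ≤ α/(2σ²). -/

import Mathlib

/-!
After normalisation the integrand `q^α p^(1-α)` is again a Gaussian kernel, now centred at `αμ`,
times `exp (α(α-1)/(2σ²))`; integrating it over `(-∞, b]` leaves, with `s = μσ`, the factor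
`Φ((b-αμ)/s) Φ(b/s)^(α-1) / Φ((b-μ)/s)^α`. This factor is at most `1` because `Φ` is
log-concave and `(b-μ)/s` is the convex combination of `(b-αμ)/s` and `b/s` with weights
`1/α` and `1 - 1/α`. Log-concavity follows from `(log Φ)'' = -φ (xΦ + φ) / Φ²` together with
`xΦ(x) + φ(x) = (2π)^(-1/2) ∫_{t ≤ x} (x - t) e^(-t²/2) dt ≥ 0`.
-/

open MeasureTheory Real Filter

/-- The standard normal cumulative distribution function
`Φ(x) = (√(2π))⁻¹ ∫_{-∞}^x exp(-t²/2) dt`. -/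
noncomputable def stdNormalCDF (x : ℝ) : ℝ :=
  (Real.sqrt (2 * Real.pi))⁻¹ * ∫ t in Set.Iic x, Real.exp (-t ^ 2 / 2)

/-- The standard normal density `φ(x) = (√(2π))⁻¹ exp(-x²/2)`. -/
noncomputable def stdNormalPDF (x : ℝ) : ℝ :=
  (Real.sqrt (2 * Real.pi))⁻¹ * Real.exp (-x ^ 2 / 2)

open Set

lemma integrable_exp_neg_sq_div_two : Integrable fun t : ℝ => exp (-t ^ 2 / 2) := by
  simpa [neg_div, div_eq_inv_mul] using integrable_exp_neg_mul_sq (b := 1 / 2) (by norm_num)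

lemma integrable_neg_mul_exp_neg_sq_div_two :
    Integrable fun t : ℝ => -t * exp (-t ^ 2 / 2) := by
  simpa [neg_div, div_eq_inv_mul] using
    (integrable_mul_exp_neg_mul_sq (b := 1 / 2) (by norm_num)).neg

lemma hasDerivAt_exp_neg_sq_div_two (x : ℝ) :
    HasDerivAt (fun t : ℝ => exp (-t ^ 2 / 2)) (-x * exp (-x ^ 2 / 2)) x := by
  have h : HasDerivAt (fun t : ℝ => -t ^ 2 / 2) (-x) x :=
    (((hasDerivAt_pow 2 x).neg).div_const 2).congr_deriv (by ring)
  simpa [mul_comm] using h.exp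

lemma integral_Iic_neg_mul_exp_neg_sq_div_two (x : ℝ) :
    ∫ t in Iic x, -t * exp (-t ^ 2 / 2) = exp (-x ^ 2 / 2) := by
  have hderiv := fun t (_ : t ∈ Iic x) => hasDerivAt_exp_neg_sq_div_two t
  have hlim := tendsto_zero_of_hasDerivAt_of_integrableOn_Iic hderiv
    integrable_neg_mul_exp_neg_sq_div_two.integrableOn
    integrable_exp_neg_sq_div_two.integrableOn
  simpa using integral_Iic_of_hasDerivAt_of_tendsto
    (hasDerivAt_exp_neg_sq_div_two x).continuousAt.continuousWithinAt
    (fun t ht => hderiv t (mem_Iic.2 (le_of_lt ht)))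
    integrable_neg_mul_exp_neg_sq_div_two.integrableOn hlim

lemma stdNormalPDF_pos (x : ℝ) : 0 < stdNormalPDF x := by
  unfold stdNormalPDF
  positivity

lemma stdNormalCDF_pos (x : ℝ) : 0 < stdNormalCDF x := by
  refine mul_pos (by positivity) ?_
  rw [setIntegral_pos_iff_support_of_nonneg_ae (ae_of_all _ fun t => (exp_pos _).le)
    integrable_exp_neg_sq_div_two.integrableOn]
  simp [Function.support, (exp_pos _).ne']

lemma hasDerivAt_stdNormalCDF (x : ℝ) : HasDerivAt stdNormalCDF (stdNormalPDF x) x := by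
  have hint := integrable_exp_neg_sq_div_two.integrableOn (s := Iic 0)
  have hsplit : stdNormalCDF = fun y => (√(2 * π))⁻¹ *
      ((∫ t in Iic 0, exp (-t ^ 2 / 2)) + ∫ t in (0 : ℝ)..y, exp (-t ^ 2 / 2)) := by
    funext y
    rw [← intervalIntegral.integral_Iic_sub_Iic hint integrable_exp_neg_sq_div_two.integrableOn,
      add_sub_cancel]
    rfl
  have hcont : Continuous fun t : ℝ => exp (-t ^ 2 / 2) := by fun_prop
  rw [hsplit]
  exact ((intervalIntegral.integral_hasDerivAt_right (hcont.intervalIntegrable _ _)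
    (hcont.stronglyMeasurableAtFilter _ _) hcont.continuousAt).const_add _).const_mul _

lemma hasDerivAt_stdNormalPDF (x : ℝ) :
    HasDerivAt stdNormalPDF (-x * stdNormalPDF x) x := by
  refine ((hasDerivAt_exp_neg_sq_div_two x).const_mul (√(2 * π))⁻¹).congr_deriv ?_
  unfold stdNormalPDF
  ring

lemma mul_stdNormalCDF_add_stdNormalPDF_nonneg (x : ℝ) :
    0 ≤ x * stdNormalCDF x + stdNormalPDF x := by
  have hle : -x * ∫ t in Iic x, exp (-t ^ 2 / 2) ≤ exp (-x ^ 2 / 2) := by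
    rw [← integral_Iic_neg_mul_exp_neg_sq_div_two, ← integral_const_mul]
    refine setIntegral_mono_on (integrable_exp_neg_sq_div_two.const_mul _).integrableOn
      integrable_neg_mul_exp_neg_sq_div_two.integrableOn measurableSet_Iic fun t ht => ?_
    exact mul_le_mul_of_nonneg_right (neg_le_neg ht) (exp_pos _).le
  have h : x * stdNormalCDF x + stdNormalPDF x =
      (√(2 * π))⁻¹ * (x * (∫ t in Iic x, exp (-t ^ 2 / 2)) + exp (-x ^ 2 / 2)) := by
    unfold stdNormalCDF stdNormalPDF
    ring
  rw [h]
  exact mul_nonneg (by positivity) (by linarith)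

lemma concaveOn_log_stdNormalCDF : ConcaveOn ℝ univ fun x => log (stdNormalCDF x) := by
  have hlog x : HasDerivAt (fun y => log (stdNormalCDF y)) (stdNormalPDF x / stdNormalCDF x) x :=
    (hasDerivAt_stdNormalCDF x).log (stdNormalCDF_pos x).ne'
  have hratio x : HasDerivAt (fun y => stdNormalPDF y / stdNormalCDF y)
      (-stdNormalPDF x * (x * stdNormalCDF x + stdNormalPDF x) / stdNormalCDF x ^ 2) x := by
    refine ((hasDerivAt_stdNormalPDF x).div (hasDerivAt_stdNormalCDF x)
      (stdNormalCDF_pos x).ne').congr_deriv ?_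
    ring
  refine Antitone.concaveOn_univ_of_deriv (fun x => (hlog x).differentiableAt) ?_
  rw [show deriv _ = _ from funext fun x => (hlog x).deriv]
  refine antitone_of_deriv_nonpos (fun x => (hratio x).differentiableAt) fun x => ?_
  rw [(hratio x).deriv]
  have := stdNormalPDF_pos x
  have := mul_stdNormalCDF_add_stdNormalPDF_nonneg x
  exact div_nonpos_of_nonpos_of_nonneg (by nlinarith) (sq_nonneg _)

lemma ConcaveOn.apply_sub_mul_add_mul_le {f : ℝ → ℝ} (hf : ConcaveOn ℝ univ f) {α : ℝ}
    (hα : 1 ≤ α) (t c : ℝ) : f (t - α * c) + (α - 1) * f t ≤ α * f (t - c) := by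
  have hα₀ : 0 < α := by linarith
  have hw : 0 ≤ 1 - 1 / α := by rw [sub_nonneg, div_le_one hα₀]; exact hα
  have h := hf.2 (mem_univ (t - α * c)) (mem_univ t) (one_div_pos.2 hα₀).le hw (by ring)
  simp only [smul_eq_mul] at h
  rw [show 1 / α * (t - α * c) + (1 - 1 / α) * t = t - c by field_simp; ring] at h
  calc f (t - α * c) + (α - 1) * f t = α * (1 / α * f (t - α * c) + (1 - 1 / α) * f t) := by
        field_simp
    _ ≤ α * f (t - c) := by gcongr

lemma setIntegral_Iic_comp_sub {E : Type*} [NormedAddCommGroup E] [NormedSpace ℝ E]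
    (g : ℝ → E) (b m : ℝ) : ∫ x in Iic b, g (x - m) = ∫ x in Iic (b - m), g x := by
  rw [← integral_indicator measurableSet_Iic, ← integral_indicator measurableSet_Iic,
    ← integral_sub_right_eq_self ((Iic (b - m)).indicator g) m]
  congr 1 with x
  simp [indicator_apply]

lemma integral_Iic_exp_neg_sub_sq_div {s : ℝ} (hs : 0 < s) (m b : ℝ) :
    ∫ x in Iic b, exp (-(x - m) ^ 2 / (2 * s ^ 2)) =
      s * √(2 * π) * stdNormalCDF ((b - m) / s) := by
  have hscale := Measure.setIntegral_comp_smul_of_pos volume (fun t : ℝ => exp (-t ^ 2 / 2))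
    (Iic (b - m)) (inv_pos.2 hs)
  simp only [smul_eq_mul, Module.finrank_self, pow_one, inv_inv,
    LinearOrderedField.smul_Iic (inv_pos.2 hs)] at hscale
  rw [setIntegral_Iic_comp_sub (fun y => exp (-y ^ 2 / (2 * s ^ 2))) b m]
  convert hscale using 1
  · congr 1 with x
    congr 1
    field_simp
  · unfold stdNormalCDF
    rw [inv_mul_eq_div]
    field_simp

/-- The paper's `f(·; m, s, -∞, b)`: the density of `N(m, s²)` conditioned on `(-∞, b]`. -/
noncomputable def truncNormalPDF (m s b x : ℝ) : ℝ :=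
  1 / (s * √(2 * π)) * exp (-(x - m) ^ 2 / (2 * s ^ 2)) / stdNormalCDF ((b - m) / s)

lemma truncNormalPDF_eq_exp {s : ℝ} (hs : 0 < s) (m b x : ℝ) :
    truncNormalPDF m s b x =
      exp (-(x - m) ^ 2 / (2 * s ^ 2) - log (s * √(2 * π) * stdNormalCDF ((b - m) / s))) := by
  have := stdNormalCDF_pos ((b - m) / s)
  rw [exp_sub, exp_log (by positivity), truncNormalPDF]
  field_simp

lemma log_integral_truncNormalPDF_rpow_mul_rpow {s : ℝ} (hs : 0 < s) (m b α : ℝ) :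
    log (∫ x in Iic b, truncNormalPDF m s b x ^ α * truncNormalPDF 0 s b x ^ (1 - α)) =
      α * (α - 1) * m ^ 2 / (2 * s ^ 2) + log (stdNormalCDF ((b - α * m) / s))
        + (α - 1) * log (stdNormalCDF (b / s)) - α * log (stdNormalCDF ((b - m) / s)) := by
  set k := s * √(2 * π)
  set C := α * (α - 1) * m ^ 2 / (2 * s ^ 2) - α * log (k * stdNormalCDF ((b - m) / s))
    - (1 - α) * log (k * stdNormalCDF ((b - 0) / s))
  have hintegrand (x : ℝ) : truncNormalPDF m s b x ^ α * truncNormalPDF 0 s b x ^ (1 - α) =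
      exp C * exp (-(x - α * m) ^ 2 / (2 * s ^ 2)) := by
    rw [truncNormalPDF_eq_exp hs, truncNormalPDF_eq_exp hs, ← exp_mul, ← exp_mul, ← exp_add,
      ← exp_add]
    congr 1
    ring
  have hk : 0 < k := by positivity
  have hΦ (y : ℝ) : stdNormalCDF y ≠ 0 := (stdNormalCDF_pos y).ne'
  rw [setIntegral_congr_fun measurableSet_Iic fun x _ => hintegrand x, integral_const_mul,
    integral_Iic_exp_neg_sub_sq_div hs, log_mul (exp_pos _).ne' (mul_ne_zero hk.ne' (hΦ _)),
    log_exp, log_mul hk.ne' (hΦ _)]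
  simp only [C, log_mul hk.ne' (hΦ _), sub_zero]
  ring

lemma log_integral_truncNormalPDF_rpow_mul_rpow_le {s : ℝ} (hs : 0 < s) (m b : ℝ) {α : ℝ}
    (hα : 1 ≤ α) :
    log (∫ x in Iic b, truncNormalPDF m s b x ^ α * truncNormalPDF 0 s b x ^ (1 - α)) ≤
      α * (α - 1) * m ^ 2 / (2 * s ^ 2) := by
  have h := concaveOn_log_stdNormalCDF.apply_sub_mul_add_mul_le hα (b / s) (m / s)
  rw [← sub_div, ← mul_div_assoc, ← sub_div] at h
  rw [log_integral_truncNormalPDF_rpow_mul_rpow hs]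
  linarith

/-- Theorem 4.1, other direction: the Rényi divergence
`D_α(f(·;μ,μσ,-∞,b) ‖ f(·;0,μσ,-∞,b))` is at most `α/(2σ²)`. -/
theorem renyi_truncated_normal_halfline_le' (μ σ α b : ℝ)
    (hμ : 0 < μ) (hσ : 0 < σ) (hα : 1 < α) :
    (1 / (α - 1)) * Real.log (∫ x in Set.Iic b,
        ((1 / (μ * σ * Real.sqrt (2 * Real.pi))) *
            Real.exp (-(x - μ) ^ 2 / (2 * μ ^ 2 * σ ^ 2)) /
            stdNormalCDF ((b - μ) / (μ * σ))) ^ α *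
        ((1 / (μ * σ * Real.sqrt (2 * Real.pi))) *
            Real.exp (-x ^ 2 / (2 * μ ^ 2 * σ ^ 2)) /
            stdNormalCDF (b / (μ * σ))) ^ (1 - α)) ≤
      α / (2 * σ ^ 2) := by
  have h := log_integral_truncNormalPDF_rpow_mul_rpow_le (mul_pos hμ hσ) μ b hα.le
  simp only [truncNormalPDF, sub_zero, mul_pow, ← mul_assoc] at h
  have hα₁ : 0 < α - 1 := sub_pos.2 hα
  calc 1 / (α - 1) * log _
      ≤ 1 / (α - 1) * (α * (α - 1) * μ ^ 2 / (2 * μ ^ 2 * σ ^ 2)) := by gcongr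
    _ = α / (2 * σ ^ 2) := by field_simp
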